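/- Let N ≥ 2 and for each i ∈ {1,…,N} let (𝟙_{S_{i,t}})_{t≥1} be an i.i.d. sequence of Bernoulli random variables with success probability p_i ∈ (0,1], where p_i ≥ p̂/N for a constant p̂ ∈ (1,2]. Let Γ_k(i) = ∑_{t=1}^k 𝟙_{S_{i,t}} and α_{k,i} = 1/Γ_k(i) (on the event Γ_k(i) ≥ 1, which almost surely holds for all large k). Then for every i the following hold with probability one: (a) ∑_{k=1}^∞ α_{k,i}/k < ∞; (b) ∑_{k=1}^∞ α_{k,i}² < ∞; (c) ∑_{k=1}^∞ |α_{k,i} − 1/(k p_i)| < ∞. -/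

import Mathlib

/-!
Hoeffding's inequality bounds the probability that `|Γ_k(i) - k p_i| ≥ k^θ` by
`2 exp(-2 k^(2θ-1))`, which is summable for `θ > 1/2`; by Borel–Cantelli, almost surely
`|Γ_k(i) - k p_i| < k^θ` for all large `k`. Taking `θ = 3/4 < 1`, eventually
`Γ_k(i) ≥ k p_i / 2`, so `α_{k,i} = O(1/k)` and
`|α_{k,i} - 1/(k p_i)| = |Γ_k(i) - k p_i| / (Γ_k(i) k p_i) = O(k^(-5/4))`:
all three series are dominated by convergent `p`-series.
-/

open MeasureTheory ProbabilityTheory Filter Asymptotics Real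
open scoped NNReal

lemma summable_exp_neg_mul_rpow {a s : ℝ} (ha : 0 < a) (hs : 0 < s) :
    Summable fun k : ℕ => exp (-a * (k : ℝ) ^ s) := by
  have hlim : Tendsto (fun k : ℕ => (k : ℝ) ^ s) atTop atTop :=
    (tendsto_rpow_atTop hs).comp tendsto_natCast_atTop_atTop
  have hO : (fun k : ℕ => exp (-a * (k : ℝ) ^ s)) =O[atTop]
      fun k : ℕ => (k : ℝ) ^ (-2 : ℝ) := by
    refine ((isLittleO_exp_neg_mul_rpow_atTop ha (-2 / s)).isBigO.comp_tendsto hlim).congr_right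
      fun k => ?_
    simp only [Function.comp_apply]
    rw [← rpow_mul (Nat.cast_nonneg k), mul_div_cancel₀ _ hs.ne']
  exact summable_of_isBigO_nat (summable_nat_rpow.mpr (by norm_num)) hO

lemma natCast_rpow_sq_div_natCast {θ : ℝ} (hθ : 1 / 2 < θ) (k : ℕ) :
    ((k : ℝ) ^ θ) ^ 2 / k = (k : ℝ) ^ (2 * θ - 1) := by
  rcases k.eq_zero_or_pos with rfl | hk
  · simp [zero_rpow (by linarith : 2 * θ - 1 ≠ 0)]
  · have hk' : (0 : ℝ) < k := Nat.cast_pos.mpr hk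
    rw [← rpow_natCast, ← rpow_mul hk'.le, rpow_sub_one hk'.ne']
    norm_num [mul_comm]

section Deterministic

variable {G : ℕ → ℝ} {q θ : ℝ}

lemma eventually_rpow_le_mul {c : ℝ} (hc : 0 < c) (hθ : θ < 1) :
    ∀ᶠ k : ℕ in atTop, (k : ℝ) ^ θ ≤ c * k := by
  have hlim : Tendsto (fun k : ℕ => (k : ℝ) ^ (θ - 1)) atTop (nhds 0) := by
    have := (tendsto_rpow_neg_atTop (sub_pos.mpr hθ)).comp tendsto_natCast_atTop_atTop
    rwa [neg_sub] at this
  filter_upwards [hlim.eventually_le_const hc, eventually_gt_atTop 0] with k hk hk0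
  have hk0' : (0 : ℝ) < k := Nat.cast_pos.mpr hk0
  calc (k : ℝ) ^ θ = (k : ℝ) ^ (θ - 1) * k := by
        rw [rpow_sub_one hk0'.ne', div_mul_cancel₀ _ hk0'.ne']
    _ ≤ c * k := by gcongr

lemma eventually_half_mul_le (hq : 0 < q) (hθ : θ < 1)
    (hG : ∀ᶠ k : ℕ in atTop, |G k - k * q| ≤ (k : ℝ) ^ θ) :
    ∀ᶠ k : ℕ in atTop, k * q / 2 ≤ G k := by
  filter_upwards [hG, eventually_rpow_le_mul (half_pos hq) hθ] with k hk hθk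
  linarith [neg_abs_le (G k - k * q)]

lemma eventually_inv_le (hq : 0 < q) (hθ : θ < 1)
    (hG : ∀ᶠ k : ℕ in atTop, |G k - k * q| ≤ (k : ℝ) ^ θ) :
    ∀ᶠ k : ℕ in atTop, 0 < G k ∧ (G k)⁻¹ ≤ 2 / q * (k : ℝ)⁻¹ := by
  filter_upwards [eventually_half_mul_le hq hθ hG, eventually_gt_atTop 0] with k hk hk0
  have hkq : (0 : ℝ) < k * q / 2 := by positivity
  refine ⟨hkq.trans_le hk, ?_⟩
  calc (G k)⁻¹ ≤ (k * q / 2)⁻¹ := inv_anti₀ hkq hk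
    _ = 2 / q * (k : ℝ)⁻¹ := by field_simp

lemma summable_inv_div_natCast (hq : 0 < q) (hθ : θ < 1)
    (hG : ∀ᶠ k : ℕ in atTop, |G k - k * q| ≤ (k : ℝ) ^ θ) :
    Summable fun k : ℕ => (G k)⁻¹ / k := by
  refine ((summable_nat_pow_inv.mpr one_lt_two).mul_left (2 / q)).of_norm_bounded_eventually_nat
    ?_
  filter_upwards [eventually_inv_le hq hθ hG] with k ⟨hpos, hle⟩
  rw [norm_of_nonneg (by positivity), div_eq_mul_inv, pow_two, mul_inv, ← mul_assoc]
  gcongr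

lemma summable_inv_sq (hq : 0 < q) (hθ : θ < 1)
    (hG : ∀ᶠ k : ℕ in atTop, |G k - k * q| ≤ (k : ℝ) ^ θ) :
    Summable fun k : ℕ => (G k)⁻¹ ^ 2 := by
  refine ((summable_nat_pow_inv.mpr one_lt_two).mul_left
    ((2 / q) ^ 2)).of_norm_bounded_eventually_nat ?_
  filter_upwards [eventually_inv_le hq hθ hG] with k ⟨hpos, hle⟩
  rw [norm_of_nonneg (by positivity), ← inv_pow, ← mul_pow]
  gcongr

lemma summable_abs_inv_sub_inv (hq : 0 < q) (hθ : θ < 1)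
    (hG : ∀ᶠ k : ℕ in atTop, |G k - k * q| ≤ (k : ℝ) ^ θ) :
    Summable fun k : ℕ => |(G k)⁻¹ - (k * q)⁻¹| := by
  refine ((summable_nat_rpow.mpr (by linarith : θ - 2 < -1)).mul_left
    (2 / q ^ 2)).of_norm_bounded_eventually_nat ?_
  filter_upwards [hG, eventually_half_mul_le hq hθ hG, eventually_gt_atTop 0]
    with k hk hhalf hk0
  have hk0' : (0 : ℝ) < k := Nat.cast_pos.mpr hk0
  have hkq : 0 < (k : ℝ) * q := by positivity
  have hGpos : 0 < G k := by linarith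
  rw [norm_abs_eq_norm, norm_eq_abs, inv_sub_inv hGpos.ne' hkq.ne', abs_div, abs_sub_comm,
    abs_of_pos (by positivity : 0 < G k * (k * q))]
  calc |G k - k * q| / (G k * (k * q)) ≤ (k : ℝ) ^ θ / (k * q / 2 * (k * q)) := by gcongr
    _ = 2 / q ^ 2 * (k : ℝ) ^ (θ - 2) := by
      rw [rpow_sub hk0', rpow_two]; field_simp

end Deterministic

section Hoeffding

variable {Ω : Type*} [MeasurableSpace Ω] {μ : Measure Ω}

lemma ProbabilityTheory.HasSubgaussianMGF.measureReal_le_abs_le [IsFiniteMeasure μ]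
    {X : Ω → ℝ} {c : ℝ≥0} (h : HasSubgaussianMGF X c μ) {ε : ℝ} (hε : 0 ≤ ε) :
    μ.real {ω | ε ≤ |X ω|} ≤ 2 * exp (-ε ^ 2 / (2 * c)) := by
  have hsplit : {ω | ε ≤ |X ω|} = {ω | ε ≤ X ω} ∪ {ω | ε ≤ (-X) ω} := by
    ext ω; simp [le_abs]
  rw [hsplit]
  calc μ.real ({ω | ε ≤ X ω} ∪ {ω | ε ≤ (-X) ω})
      ≤ μ.real {ω | ε ≤ X ω} + μ.real {ω | ε ≤ (-X) ω} := measureReal_union_le _ _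
    _ ≤ exp (-ε ^ 2 / (2 * c)) + exp (-ε ^ 2 / (2 * c)) :=
        add_le_add (h.measure_ge_le hε) (h.neg.measure_ge_le hε)
    _ = 2 * exp (-ε ^ 2 / (2 * c)) := by ring

lemma ProbabilityTheory.iIndepSet.measureReal_le_abs_sum_indicator_sub_le
    [IsProbabilityMeasure μ] {ι : Type*} {S : ι → Set Ω} (hS : ∀ i, MeasurableSet (S i))
    (h : iIndepSet S μ) (s : Finset ι) {ε : ℝ} (hε : 0 ≤ ε) :
    μ.real {ω | ε ≤ |∑ i ∈ s, ((S i).indicator 1 ω - μ.real (S i))|} ≤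
      2 * exp (-2 * ε ^ 2 / s.card) := by
  have hind : iIndepFun (fun i ω => (S i).indicator 1 ω - μ.real (S i)) μ :=
    h.iIndepFun_indicator.comp (fun i x => x - μ.real (S i)) fun _ => measurable_sub_const _
  have hsub : ∀ i ∈ s, HasSubgaussianMGF (fun ω => (S i).indicator 1 ω - μ.real (S i))
      ((‖(1 : ℝ) - 0‖₊ / 2) ^ 2) μ := fun i _ => by
    rw [← integral_indicator_one (hS i)]
    refine hasSubgaussianMGF_of_mem_Icc (measurable_const.indicator (hS i)).aemeasurable
      (ae_of_all _ fun ω => ?_)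
    by_cases hω : ω ∈ S i <;> simp [hω]
  convert (HasSubgaussianMGF.sum_of_iIndepFun hind hsub).measureReal_le_abs_le hε using 3
  simp only [neg_mul, sub_zero, nnnorm_one, one_div, inv_pow, Finset.sum_const, nsmul_eq_mul,
    NNReal.coe_mul, NNReal.coe_natCast, NNReal.coe_inv, NNReal.coe_pow, NNReal.coe_ofNat]
  ring

lemma ProbabilityTheory.iIndepSet.ae_eventually_abs_sum_indicator_sub_lt
    [IsProbabilityMeasure μ] {S : ℕ → Set Ω} (hS : ∀ t, MeasurableSet (S t))
    (h : iIndepSet S μ) {θ : ℝ} (hθ : 1 / 2 < θ) :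
    ∀ᵐ ω ∂μ, ∀ᶠ k in atTop,
      |∑ t ∈ Finset.Icc 1 k, ((S t).indicator 1 ω - μ.real (S t))| < (k : ℝ) ^ θ := by
  set A : ℕ → Set Ω := fun k =>
    {ω | (k : ℝ) ^ θ ≤ |∑ t ∈ Finset.Icc 1 k, ((S t).indicator 1 ω - μ.real (S t))|}
  have hA : ∀ k, μ.real (A k) ≤ 2 * exp (-2 * (k : ℝ) ^ (2 * θ - 1)) := fun k => by
    have := h.measureReal_le_abs_sum_indicator_sub_le hS (Finset.Icc 1 k)
      (rpow_nonneg k.cast_nonneg θ)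
    rwa [Nat.card_Icc, Nat.add_sub_cancel, mul_div_assoc, natCast_rpow_sq_div_natCast hθ] at this
  have hsum : Summable fun k => μ.real (A k) :=
    ((summable_exp_neg_mul_rpow two_pos (by linarith)).mul_left 2).of_nonneg_of_le
      (fun _ => measureReal_nonneg) hA
  have hfin : ∑' k, μ (A k) ≠ ⊤ := by
    simp_rw [← fun k => ofReal_measureReal (μ := μ) (s := A k)]
    rw [← ENNReal.ofReal_tsum_of_nonneg (fun _ => measureReal_nonneg) hsum]
    exact ENNReal.ofReal_ne_top
  filter_upwards [ae_eventually_notMem hfin] with ω hω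
  exact hω.mono fun k hk => not_le.mp hk

end Hoeffding

theorem stmt_10_general {Ω : Type*} [MeasurableSpace Ω] (μ : Measure Ω) [IsProbabilityMeasure μ]
    (N : ℕ) (p : Fin N → ℝ)
    (hp0 : ∀ i, 0 < p i)
    (S : Fin N → ℕ → Set Ω) (hSm : ∀ i t, MeasurableSet (S i t))
    (hindep : ∀ i, iIndepSet (fun t => S i t) μ)
    (hprob : ∀ i t, μ (S i t) = ENNReal.ofReal (p i))
    (Γ : ℕ → Fin N → Ω → ℝ)
    (hΓ : ∀ k i ω, Γ k i ω = ∑ t ∈ Finset.Icc 1 k, (S i t).indicator (fun _ => (1 : ℝ)) ω)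
    (α : ℕ → Fin N → Ω → ℝ) (hα : ∀ k i ω, α k i ω = (Γ k i ω)⁻¹) :
    ∀ i, ∀ᵐ ω ∂μ,
      Summable (fun k => α k i ω / k) ∧
      Summable (fun k => (α k i ω) ^ 2) ∧
      Summable (fun k => |α k i ω - 1 / (k * p i)|) := by
  intro i
  have hdev : ∀ k ω, Γ k i ω - k * p i =
      ∑ t ∈ Finset.Icc 1 k, ((S i t).indicator 1 ω - μ.real (S i t)) := fun k ω => by
    simp [hΓ, Finset.sum_sub_distrib, measureReal_def, hprob, (hp0 i).le, Pi.one_def]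
  filter_upwards [(hindep i).ae_eventually_abs_sum_indicator_sub_lt (hSm i)
    (θ := 3 / 4) (by norm_num)] with ω hω
  have hG : ∀ᶠ k : ℕ in atTop, |Γ k i ω - k * p i| ≤ (k : ℝ) ^ (3 / 4 : ℝ) :=
    hω.mono fun k hk => (hdev k ω).symm ▸ hk.le
  simp only [hα, one_div]
  exact ⟨summable_inv_div_natCast (hp0 i) (by norm_num) hG,
    summable_inv_sq (hp0 i) (by norm_num) hG, summable_abs_inv_sub_inv (hp0 i) (by norm_num) hG⟩

/-- With `S_{i,t}`, `Γ_k(i)` and the uncoordinated stepsizes `α_{k,i} = 1/Γ_k(i)`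
as in the gossip algorithm (i.i.d. update indicators with success probabilities
`p_i ≥ p̂/N`, `p̂ ∈ (1,2]`), for every `i` the following hold with probability one:
(a) `∑_k α_{k,i}/k < ∞`; (b) `∑_k α_{k,i}² < ∞`; (c) `∑_k |α_{k,i} − 1/(k p_i)| < ∞`. -/
theorem stmt_10 {Ω : Type*} [MeasurableSpace Ω] (μ : Measure Ω) [IsProbabilityMeasure μ]
    (N : ℕ) (hN : 2 ≤ N) (p : Fin N → ℝ) (phat : ℝ)
    (hphat1 : 1 < phat) (hphat2 : phat ≤ 2)
    (hp0 : ∀ i, 0 < p i) (hp1 : ∀ i, p i ≤ 1) (hplb : ∀ i, phat / N ≤ p i)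
    (S : Fin N → ℕ → Set Ω) (hSm : ∀ i t, MeasurableSet (S i t))
    (hindep : ∀ i, iIndepSet (fun t => S i t) μ)
    (hprob : ∀ i t, μ (S i t) = ENNReal.ofReal (p i))
    (Γ : ℕ → Fin N → Ω → ℝ)
    (hΓ : ∀ k i ω, Γ k i ω = ∑ t ∈ Finset.Icc 1 k, (S i t).indicator (fun _ => (1 : ℝ)) ω)
    (α : ℕ → Fin N → Ω → ℝ) (hα : ∀ k i ω, α k i ω = (Γ k i ω)⁻¹) :
    ∀ i, ∀ᵐ ω ∂μ,
      Summable (fun k => α k i ω / k) ∧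
      Summable (fun k => (α k i ω) ^ 2) ∧
      Summable (fun k => |α k i ω - 1 / (k * p i)|) :=
  stmt_10_general μ N p hp0 S hSm hindep hprob Γ hΓ α hα
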